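/- Let k ≥ 1 and let (e_i)_{i=1}^{3k} be the standard orthonormal basis of ℝ^{3k} with the standard inner product ⟨·,·⟩. For 1 ≤ i ≤ k define p_i = √2 · e_i, q_i = (1/√2) · e_{k+1−i} + √(3/2) · e_{k+i}, r_i = √(2/3) · e_{2k+1−i} + √(4/3) · e_{2k+i}. Then the 3k vectors p_1,…,p_k, q_1,…,q_k, r_1,…,r_k are linearly independent and for all 1 ≤ i, j ≤ k: ⟨p_i, p_j⟩ = ⟨q_i, q_j⟩ = ⟨r_i, r_j⟩ = 2δ_{ij}, ⟨p_i, q_j⟩ = ⟨q_i, r_j⟩ = δ_{i, k+1−j}, and ⟨p_i, r_j⟩ = 0. -/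
import Mathlib


open scoped RealInnerProductSpace

/-- `p_i = √2 · e_i` in `ℝ^{3k}` (the index `i : Fin k` stands for the 1-based index `i+1`,
and the standard basis is 0-indexed). -/
noncomputable def pVec (k : ℕ) (i : Fin k) : EuclideanSpace ℝ (Fin (3 * k)) :=
  Real.sqrt 2 • EuclideanSpace.single ⟨i, by have := i.isLt; omega⟩ 1

/-- `q_i = (1/√2) · e_{k+1−i} + √(3/2) · e_{k+i}`. -/
noncomputable def qVec (k : ℕ) (i : Fin k) : EuclideanSpace ℝ (Fin (3 * k)) :=
  (1 / Real.sqrt 2) • EuclideanSpace.single ⟨k - 1 - i, by have := i.isLt; omega⟩ 1 +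
    Real.sqrt (3 / 2) • EuclideanSpace.single ⟨k + i, by have := i.isLt; omega⟩ 1

/-- `r_i = √(2/3) · e_{2k+1−i} + √(4/3) · e_{2k+i}`. -/
noncomputable def rVec (k : ℕ) (i : Fin k) : EuclideanSpace ℝ (Fin (3 * k)) :=
  Real.sqrt (2 / 3) • EuclideanSpace.single ⟨2 * k - 1 - i, by have := i.isLt; omega⟩ 1 +
    Real.sqrt (4 / 3) • EuclideanSpace.single ⟨2 * k + i, by have := i.isLt; omega⟩ 1

lemma pVec_apply (k : ℕ) (i : Fin k) (m : Fin (3 * k)) :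
    pVec k i m = if (m : ℕ) = i then Real.sqrt 2 else 0 := by
  simp only [pVec, PiLp.smul_apply, EuclideanSpace.single_apply, Fin.ext_iff, smul_eq_mul]
  split_ifs <;> simp

lemma qVec_apply (k : ℕ) (i : Fin k) (m : Fin (3 * k)) :
    qVec k i m = if (m : ℕ) = k - 1 - i then 1 / Real.sqrt 2
      else if (m : ℕ) = k + i then Real.sqrt (3 / 2) else 0 := by
  have hik := i.isLt
  simp only [qVec, PiLp.add_apply, PiLp.smul_apply, EuclideanSpace.single_apply, Fin.ext_iff,
    smul_eq_mul]
  split_ifs <;> first | (exfalso; omega) | ring1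

lemma rVec_apply (k : ℕ) (i : Fin k) (m : Fin (3 * k)) :
    rVec k i m = if (m : ℕ) = 2 * k - 1 - i then Real.sqrt (2 / 3)
      else if (m : ℕ) = 2 * k + i then Real.sqrt (4 / 3) else 0 := by
  have hik := i.isLt
  simp only [rVec, PiLp.add_apply, PiLp.smul_apply, EuclideanSpace.single_apply, Fin.ext_iff,
    smul_eq_mul]
  split_ifs <;> first | (exfalso; omega) | ring1

lemma inner_single_single {n : ℕ} (i j : Fin n) (a b : ℝ) :
    ⟪EuclideanSpace.single i a, EuclideanSpace.single j b⟫ = if i = j then a * b else 0 := by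
  rw [EuclideanSpace.inner_single_left]
  simp [EuclideanSpace.single_apply]

/-- For `k ≥ 1`, the `3k` vectors `p_i, q_i, r_i` are linearly independent and
have the inner products `⟨p_i,p_j⟩ = ⟨q_i,q_j⟩ = ⟨r_i,r_j⟩ = 2δ_{ij}`,
`⟨p_i,q_j⟩ = ⟨q_i,r_j⟩ = δ_{i,k+1−j}` (i.e. `1` iff the 1-based indices satisfy `i + j = k+1`)
and `⟨p_i,r_j⟩ = 0`. -/
theorem stmt13 (k : ℕ) (hk : 1 ≤ k) :
    LinearIndependent ℝ (Sum.elim (pVec k) (Sum.elim (qVec k) (rVec k))) ∧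
    (∀ i j : Fin k, ⟪pVec k i, pVec k j⟫ = if i = j then 2 else 0) ∧
    (∀ i j : Fin k, ⟪qVec k i, qVec k j⟫ = if i = j then 2 else 0) ∧
    (∀ i j : Fin k, ⟪rVec k i, rVec k j⟫ = if i = j then 2 else 0) ∧
    (∀ i j : Fin k, ⟪pVec k i, qVec k j⟫ = if (i : ℕ) + (j : ℕ) + 1 = k then 1 else 0) ∧
    (∀ i j : Fin k, ⟪qVec k i, rVec k j⟫ = if (i : ℕ) + (j : ℕ) + 1 = k then 1 else 0) ∧
    (∀ i j : Fin k, ⟪pVec k i, rVec k j⟫ = 0) := by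
  have h2 : Real.sqrt 2 * Real.sqrt 2 = 2 := Real.mul_self_sqrt (by norm_num)
  have h32 : Real.sqrt (3 / 2) * Real.sqrt (3 / 2) = 3 / 2 := Real.mul_self_sqrt (by norm_num)
  have h23 : Real.sqrt (2 / 3) * Real.sqrt (2 / 3) = 2 / 3 := Real.mul_self_sqrt (by norm_num)
  have h43 : Real.sqrt (4 / 3) * Real.sqrt (4 / 3) = 4 / 3 := Real.mul_self_sqrt (by norm_num)
  have h2pos : Real.sqrt 2 ≠ 0 := by positivity
  have h12 : (1 / Real.sqrt 2) * (1 / Real.sqrt 2) = 1 / 2 := by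
    rw [div_mul_div_comm, one_mul, h2]
  have hpq : Real.sqrt 2 * (1 / Real.sqrt 2) = 1 := by field_simp
  have hqr : Real.sqrt (3 / 2) * Real.sqrt (2 / 3) = 1 := by
    rw [← Real.sqrt_mul (by norm_num)]; norm_num
  refine ⟨?_, ?_, ?_, ?_, ?_, ?_, ?_⟩
  · -- linear independence
    rw [Fintype.linearIndependent_iff]
    intro g hg
    have key : ∀ m : Fin (3 * k),
        ∑ x, g x * (Sum.elim (pVec k) (Sum.elim (qVec k) (rVec k)) x m) = 0 := by
      intro m
      have h := congrArg (EuclideanSpace.proj m) hg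
      simp only [map_sum, map_smul, map_zero, smul_eq_mul] at h
      simpa using h
    have hr : ∀ j : Fin k, g (Sum.inr (Sum.inr j)) = 0 := by
      intro j
      have hjk := j.isLt
      have hm := key ⟨2 * k + j, by omega⟩
      rw [Fintype.sum_sum_type, Fintype.sum_sum_type] at hm
      simp only [Sum.elim_inl, Sum.elim_inr] at hm
      rw [Finset.sum_eq_zero (fun a _ => by
            rw [pVec_apply, if_neg (show ¬(2 * k + (j : ℕ) = (a : ℕ)) by
              have := a.isLt; omega), mul_zero]),
          Finset.sum_eq_zero (fun a _ => by
            rw [qVec_apply,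
              if_neg (show ¬(2 * k + (j : ℕ) = k - 1 - (a : ℕ)) by have := a.isLt; omega),
              if_neg (show ¬(2 * k + (j : ℕ) = k + (a : ℕ)) by have := a.isLt; omega),
              mul_zero]),
          Finset.sum_eq_single j (fun a _ ha => by
            have ha' : (a : ℕ) ≠ (j : ℕ) := fun e => ha (Fin.ext e)
            rw [rVec_apply,
              if_neg (show ¬(2 * k + (j : ℕ) = 2 * k - 1 - (a : ℕ)) by have := a.isLt; omega),
              if_neg (show ¬(2 * k + (j : ℕ) = 2 * k + (a : ℕ)) by omega), mul_zero])
            (fun h => absurd (Finset.mem_univ j) h)] at hm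
      rw [rVec_apply, if_neg (show ¬(2 * k + (j : ℕ) = 2 * k - 1 - (j : ℕ)) by omega),
        if_pos rfl] at hm
      have h43pos : Real.sqrt (4 / 3) ≠ 0 := by positivity
      simp only [zero_add, add_zero] at hm
      exact (mul_eq_zero.mp hm).resolve_right h43pos
    have hq : ∀ j : Fin k, g (Sum.inr (Sum.inl j)) = 0 := by
      intro j
      have hjk := j.isLt
      have hm := key ⟨k + j, by omega⟩
      rw [Fintype.sum_sum_type, Fintype.sum_sum_type] at hm
      simp only [Sum.elim_inl, Sum.elim_inr] at hm
      rw [Finset.sum_eq_zero (fun a _ => by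
            rw [pVec_apply, if_neg (show ¬(k + (j : ℕ) = (a : ℕ)) by
              have := a.isLt; omega), mul_zero]),
          Finset.sum_eq_single j (fun a _ ha => by
            have ha' : (a : ℕ) ≠ (j : ℕ) := fun e => ha (Fin.ext e)
            rw [qVec_apply,
              if_neg (show ¬(k + (j : ℕ) = k - 1 - (a : ℕ)) by have := a.isLt; omega),
              if_neg (show ¬(k + (j : ℕ) = k + (a : ℕ)) by omega), mul_zero])
            (fun h => absurd (Finset.mem_univ j) h),
          Finset.sum_eq_zero (fun a _ => by rw [hr a, zero_mul])] at hm
      rw [qVec_apply, if_neg (show ¬(k + (j : ℕ) = k - 1 - (j : ℕ)) by omega),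
        if_pos rfl] at hm
      have h32pos : Real.sqrt (3 / 2) ≠ 0 := by positivity
      simp only [zero_add, add_zero] at hm
      exact (mul_eq_zero.mp hm).resolve_right h32pos
    have hp : ∀ j : Fin k, g (Sum.inl j) = 0 := by
      intro j
      have hjk := j.isLt
      have hm := key ⟨j, by omega⟩
      rw [Fintype.sum_sum_type, Fintype.sum_sum_type] at hm
      simp only [Sum.elim_inl, Sum.elim_inr] at hm
      rw [Finset.sum_eq_single j (fun a _ ha => by
            have ha' : (a : ℕ) ≠ (j : ℕ) := fun e => ha (Fin.ext e)
            rw [pVec_apply, if_neg (show ¬((j : ℕ) = (a : ℕ)) by omega), mul_zero])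
            (fun h => absurd (Finset.mem_univ j) h),
          Finset.sum_eq_zero (fun a _ => by rw [hq a, zero_mul]),
          Finset.sum_eq_zero (fun a _ => by rw [hr a, zero_mul])] at hm
      rw [pVec_apply, if_pos rfl] at hm
      simp only [zero_add, add_zero] at hm
      exact (mul_eq_zero.mp hm).resolve_right h2pos
    intro x
    rcases x with a | a | a
    · exact hp a
    · exact hq a
    · exact hr a
  all_goals {
    intro i j
    have hik := i.isLt; have hjk := j.isLt
    simp only [pVec, qVec, rVec, inner_add_left, inner_add_right, inner_smul_left,
      inner_smul_right, inner_single_single, RCLike.conj_to_real, Fin.mk.injEq, Fin.ext_iff]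
    split_ifs <;>
      first
        | (exfalso; omega)
        | ring1
        | linear_combination h2
        | linear_combination hpq
        | linear_combination hqr
        | linear_combination h12 + h32
        | linear_combination h23 + h43 }
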